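/- Let X be a topological vector space, f, g proper continuous convex functions on X, and α ∈ ℝ. If f, g have the intersection property on X at level α and {f ≤ α} ∩ {g ≤ α} ≠ ∅, then there exist x₁ ∈ dom(f), x₂ ∈ dom(g) and φ₁ ∈ ∂_{Φ_conv} f(x₁), φ₂ ∈ ∂_{Φ_conv} g(x₂) such that φ₁ and φ₂ have the intersection property on X at every level β ≤ α. -/

import Mathlib

def edom {X : Type*} (f : X → EReal) : Set X := {x | f x ≠ ⊤}

def ERealConvexOn {X : Type*} [AddCommGroup X] [Module ℝ X] (f : X → EReal) : Prop :=
  ∀ x y : X, ∀ t : ℝ, 0 ≤ t → t ≤ 1 →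
    f (t • x + (1 - t) • y) ≤ (t : EReal) * f x + ((1 - t : ℝ) : EReal) * f y

/-- The class `Φ_conv` of continuous affine functions. -/
def PhiConvCls (X : Type*) [AddCommGroup X] [Module ℝ X] [TopologicalSpace X] :
    Set (X → ℝ) :=
  {φ | ∃ (ℓ : X →L[ℝ] ℝ) (c : ℝ), ∀ x, φ x = ℓ x + c}

/-- The `Φ_conv`-subdifferential of `f` at `x₀`. -/
def SubdiffConv {X : Type*} [AddCommGroup X] [Module ℝ X] [TopologicalSpace X]
    (f : X → EReal) (x₀ : X) : Set (X → ℝ) :=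
  {φ | φ ∈ PhiConvCls X ∧ ∀ x, ((φ x - φ x₀ : ℝ) : EReal) + f x₀ ≤ f x}

def IntersectionProperty {X : Type*} (φ₁ φ₂ : X → ℝ) (α : ℝ) : Prop :=
  {x | φ₁ x < α} ∩ {x | φ₂ x < α} = ∅

/-!
Fix `x₀` with `f x₀ ≤ α` and `g x₀ ≤ α`. Everything rests on the optimality condition: if a
continuous convex `f` attains its minimum `v` over a convex set `K` at `x₀`, separating the open
strict epigraph of `f` from `K × (-∞, v]` gives a subgradient of `f` at `x₀` that is `≥ v` on `K`.
If `f ≥ α` everywhere, take `K = univ` for `f`, so that `{φ₁ < α} = ∅`, and any subgradient of `g`;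
symmetrically if `g ≥ α`. Otherwise `{f < α}` and `{g < α}` are nonempty, open, convex and
disjoint, with `x₀` in both closures, so a functional `ℓ` separating them satisfies `f ≥ α` on
`{ℓ ≥ ℓ x₀}` and `g ≥ α` on `{ℓ ≤ ℓ x₀}`; the subgradients obtained on these two half-spaces have
their strict `α`-sublevel sets in opposite open half-spaces. Lowering the level only shrinks them.
-/

open Set

section IntersectionProperty

variable {X : Type*} {φ₁ φ₂ : X → ℝ} {α β : ℝ}

theorem IntersectionProperty.symm (h : IntersectionProperty φ₁ φ₂ α) :
    IntersectionProperty φ₂ φ₁ α :=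
  (inter_comm _ _).trans h

theorem IntersectionProperty.of_le (h : IntersectionProperty φ₁ φ₂ α) (hβ : β ≤ α) :
    IntersectionProperty φ₁ φ₂ β :=
  subset_empty_iff.1 <| h ▸ inter_subset_inter (fun _ hx => lt_of_lt_of_le hx hβ)
    (fun _ hx => lt_of_lt_of_le hx hβ)

end IntersectionProperty

theorem mem_subdiffConv_of_le {X : Type*} [AddCommGroup X] [Module ℝ X] [TopologicalSpace X]
    {f : X → EReal} {φ : X → ℝ} {x₀ : X} (hφ : φ ∈ PhiConvCls X) (hx₀ : f x₀ = φ x₀)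
    (hle : ∀ x, (φ x : EReal) ≤ f x) : φ ∈ SubdiffConv f x₀ :=
  ⟨hφ, fun x => by rw [hx₀, ← EReal.coe_add, sub_add_cancel]; exact hle x⟩

namespace ERealConvexOn

variable {X : Type*} [AddCommGroup X] [Module ℝ X] {f : X → EReal}

theorem apply_le (hf : ERealConvexOn f) {x y : X} {s t a : ℝ} (hx : f x ≤ s) (hy : f y ≤ t)
    (ha₀ : 0 ≤ a) (ha₁ : a ≤ 1) :
    f (a • x + (1 - a) • y) ≤ ((a * s + (1 - a) * t : ℝ) : EReal) :=
  calc f (a • x + (1 - a) • y) ≤ (a : EReal) * f x + ((1 - a : ℝ) : EReal) * f y :=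
        hf x y a ha₀ ha₁
    _ ≤ (a : EReal) * s + ((1 - a : ℝ) : EReal) * t :=
        add_le_add (mul_le_mul_of_nonneg_left hx (by exact_mod_cast ha₀))
          (mul_le_mul_of_nonneg_left hy (by exact_mod_cast sub_nonneg.2 ha₁))
    _ = ((a * s + (1 - a) * t : ℝ) : EReal) := by norm_cast

theorem apply_lt (hf : ERealConvexOn f) {x y : X} {s t a : ℝ} (hx : f x < s) (hy : f y ≤ t)
    (ha₀ : 0 < a) (ha₁ : a ≤ 1) :
    f (a • x + (1 - a) • y) < ((a * s + (1 - a) * t : ℝ) : EReal) := by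
  obtain ⟨s', hxs', hs's⟩ := EReal.exists_between_coe_real hx
  refine (hf.apply_le hxs'.le hy ha₀.le ha₁).trans_lt (EReal.coe_lt_coe_iff.2 ?_)
  gcongr
  exact_mod_cast hs's

theorem apply_lt_of_lt (hf : ERealConvexOn f) {x y : X} {s t a : ℝ} (hx : f x < s)
    (hy : f y < t) (ha₀ : 0 ≤ a) (ha₁ : a ≤ 1) :
    f (a • x + (1 - a) • y) < ((a * s + (1 - a) * t : ℝ) : EReal) := by
  rcases ha₀.eq_or_lt with rfl | ha₀
  · simpa using hy
  · exact hf.apply_lt hx hy.le ha₀ ha₁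

theorem convex_strictEpigraph (hf : ERealConvexOn f) : Convex ℝ {p : X × ℝ | f p.1 < p.2} := by
  rintro ⟨x, s⟩ hx ⟨y, t⟩ hy a b ha _ hab
  obtain rfl : b = 1 - a := by linarith
  simpa using hf.apply_lt_of_lt hx hy ha (by linarith)

theorem convex_setOf_lt (hf : ERealConvexOn f) (α : ℝ) : Convex ℝ {x | f x < α} := by
  intro x hx y hy a b ha _ hab
  obtain rfl : b = 1 - a := by linarith
  simpa [← add_mul] using hf.apply_lt_of_lt hx hy ha (by linarith)

variable [TopologicalSpace X]

theorem mem_closure_setOf_lt [ContinuousAdd X] [ContinuousSMul ℝ X] (hf : ERealConvexOn f)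
    {x y : X} {α : ℝ} (hx : f x ≤ α) (hy : f y < α) : x ∈ closure {z | f z < α} := by
  have hseg : openSegment ℝ y x ⊆ {z | f z < α} := by
    rintro _ ⟨a, b, ha, _, hab, rfl⟩
    obtain rfl : b = 1 - a := by linarith
    simpa [← add_mul] using hf.apply_lt hy hx ha (by linarith)
  exact closure_mono hseg (segment_subset_closure_openSegment (right_mem_segment ℝ y x))

variable [IsTopologicalAddGroup X] [ContinuousSMul ℝ X]

theorem exists_subdiffConv_forall_le (hf : ERealConvexOn f) (hfc : Continuous f) {K : Set X}
    (hK : Convex ℝ K) {x₀ : X} (hx₀K : x₀ ∈ K) {v : ℝ} (hx₀ : f x₀ ≤ v)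
    (hKv : ∀ x ∈ K, v ≤ f x) : ∃ φ ∈ SubdiffConv f x₀, ∀ x ∈ K, v ≤ φ x := by
  have hfx₀ : f x₀ = v := le_antisymm hx₀ (hKv x₀ hx₀K)
  have hdisj : Disjoint {p : X × ℝ | f p.1 < p.2} (K ×ˢ Iic v) := disjoint_left.2
    fun p hp hpK => (hp.trans_le (EReal.coe_le_coe_iff.2 hpK.2)).not_ge (hKv _ hpK.1)
  obtain ⟨Φ, u, hΦA, hΦB⟩ := geometric_hahn_banach_open hf.convex_strictEpigraph
    (isOpen_lt (hfc.comp continuous_fst) (continuous_coe_real_ereal.comp continuous_snd))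
    (hK.prod (convex_Iic v)) hdisj
  set L := Φ.comp (.inl ℝ X ℝ)
  set r := Φ (0, 1)
  have hΦ (x : X) (t : ℝ) : Φ (x, t) = L x + t * r := by
    rw [← Φ.comp_inl_add_comp_inr, ← smul_eq_mul, ← map_smul]
    simp [L]
  have hA (x : X) (t : ℝ) (ht : f x < t) : L x + t * r < u := hΦ x t ▸ hΦA (x, t) ht
  have hB (x : X) (hx : x ∈ K) : u ≤ L x + v * r := hΦ x v ▸ hΦB (x, v) ⟨hx, mem_Iic.2 le_rfl⟩
  have hr : r < 0 := by
    have := hA x₀ (v + 1) (by rw [hfx₀]; exact_mod_cast lt_add_one v)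
    linarith [hB x₀ hx₀K]
  -- the hyperplane `Φ = u` is the graph of an affine minorant of `f`
  have hlow (x : X) : (((u - L x) / r : ℝ) : EReal) ≤ f x :=
    EReal.le_of_forall_lt_iff_le.1 fun t ht =>
      EReal.coe_le_coe_iff.2 ((div_le_iff_of_neg hr).2 (by linarith [hA x t ht]))
  have hu : u = L x₀ + v * r := by
    have := (div_le_iff_of_neg hr).1 (EReal.coe_le_coe_iff.1 (hfx₀ ▸ hlow x₀))
    linarith [hB x₀ hx₀K]
  refine ⟨fun x => (u - L x) / r, mem_subdiffConv_of_le ⟨-(r⁻¹ • L), u / r, fun x => ?_⟩ ?_ hlow,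
    fun x hx => (le_div_iff_of_neg hr).2 (by linarith [hB x hx])⟩
  · simp only [neg_apply, smul_apply, smul_eq_mul]
    ring
  · rw [hfx₀, hu, add_sub_cancel_left, mul_div_cancel_right₀ _ hr.ne]

end ERealConvexOn

section

variable {X : Type*} [AddCommGroup X] [Module ℝ X] [TopologicalSpace X]
  [IsTopologicalAddGroup X] [ContinuousSMul ℝ X] {f g : X → EReal} {x₀ : X} {α : ℝ}

theorem exists_subdiffConv_intersectionProperty_of_forall_le (hf : ERealConvexOn f)
    (hfc : Continuous f) (hg : ERealConvexOn g) (hgc : Continuous g) (hgbot : g x₀ ≠ ⊥)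
    (hfα : ∀ x, α ≤ f x) (hfx : f x₀ ≤ α) (hgx : g x₀ ≤ α) :
    ∃ φ₁ ∈ SubdiffConv f x₀, ∃ φ₂ ∈ SubdiffConv g x₀, IntersectionProperty φ₁ φ₂ α := by
  obtain ⟨φ₁, h₁, hφ₁⟩ :=
    hf.exists_subdiffConv_forall_le hfc convex_univ (mem_univ x₀) hfx fun x _ => hfα x
  have hg_real : g x₀ = (g x₀).toReal :=
    (EReal.coe_toReal (hgx.trans_lt (EReal.coe_lt_top α)).ne hgbot).symm
  obtain ⟨φ₂, h₂, -⟩ := hg.exists_subdiffConv_forall_le hgc (convex_singleton x₀)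
    (mem_singleton x₀) hg_real.le (by rintro x rfl; exact hg_real.ge)
  exact ⟨φ₁, h₁, φ₂, h₂, eq_empty_of_forall_notMem fun x hx => (hφ₁ x trivial).not_gt hx.1⟩

theorem exists_subdiffConv_intersectionProperty_of_exists_lt (hf : ERealConvexOn f)
    (hfc : Continuous f) (hg : ERealConvexOn g) (hgc : Continuous g)
    (hdisj : Disjoint {x | f x < α} {x | g x < α}) (hfx : f x₀ ≤ α) (hgx : g x₀ ≤ α)
    (hU : ∃ y, f y < α) (hV : ∃ y, g y < α) :
    ∃ φ₁ ∈ SubdiffConv f x₀, ∃ φ₂ ∈ SubdiffConv g x₀, IntersectionProperty φ₁ φ₂ α := by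
  obtain ⟨y₁, hy₁⟩ := hU
  obtain ⟨y₂, hy₂⟩ := hV
  obtain ⟨ℓ, s, hℓU, hℓV⟩ := geometric_hahn_banach_open_open (hf.convex_setOf_lt α)
    (isOpen_lt hfc continuous_const) (hg.convex_setOf_lt α) (isOpen_lt hgc continuous_const) hdisj
  have hle : ℓ x₀ ≤ s := closure_minimal (fun x hx => (hℓU x hx).le)
    (isClosed_le ℓ.continuous continuous_const) (hf.mem_closure_setOf_lt hfx hy₁)
  have hge : s ≤ ℓ x₀ := closure_minimal (fun x hx => (hℓV x hx).le)
    (isClosed_le continuous_const ℓ.continuous) (hg.mem_closure_setOf_lt hgx hy₂)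
  obtain ⟨φ₁, h₁, hφ₁⟩ := hf.exists_subdiffConv_forall_le hfc
    (convex_halfSpace_ge ℓ.isLinear (ℓ x₀)) (le_refl (ℓ x₀)) hfx
    fun x hx => not_lt.1 fun hlt => (hℓU x hlt).not_ge (hge.trans hx)
  obtain ⟨φ₂, h₂, hφ₂⟩ := hg.exists_subdiffConv_forall_le hgc
    (convex_halfSpace_le ℓ.isLinear (ℓ x₀)) (le_refl (ℓ x₀)) hgx
    fun x hx => not_lt.1 fun hlt => (hℓV x hlt).not_ge (hx.trans hle)
  refine ⟨φ₁, h₁, φ₂, h₂, eq_empty_of_forall_notMem fun x ⟨hx₁, hx₂⟩ => ?_⟩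
  rcases le_total (ℓ x₀) (ℓ x) with h | h
  · exact (hφ₁ x h).not_gt hx₁
  · exact (hφ₂ x h).not_gt hx₂

end

theorem intersection_property_conv_subgradients_all_levels_general
    {X : Type*} [AddCommGroup X] [Module ℝ X] [TopologicalSpace X]
    [IsTopologicalAddGroup X] [ContinuousSMul ℝ X]
    (f g : X → EReal) (hfbot : ∀ x, f x ≠ ⊥) (hgbot : ∀ x, g x ≠ ⊥)
    (hfconv : ERealConvexOn f) (hgconv : ERealConvexOn g)
    (hfcont : Continuous f) (hgcont : Continuous g)
    (α : ℝ)
    (hIP : {x | f x < (α : EReal)} ∩ {x | g x < (α : EReal)} = ∅)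
    (hmeet : ({x | f x ≤ (α : EReal)} ∩ {x | g x ≤ (α : EReal)}).Nonempty) :
    ∃ x₁ ∈ edom f, ∃ x₂ ∈ edom g,
      ∃ φ₁ ∈ SubdiffConv f x₁, ∃ φ₂ ∈ SubdiffConv g x₂,
        ∀ β : ℝ, β ≤ α → IntersectionProperty φ₁ φ₂ β := by
  obtain ⟨x₀, hfx, hgx⟩ := hmeet
  suffices h : ∃ φ₁ ∈ SubdiffConv f x₀, ∃ φ₂ ∈ SubdiffConv g x₀, IntersectionProperty φ₁ φ₂ α by
    obtain ⟨φ₁, h₁, φ₂, h₂, hφ⟩ := h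
    exact ⟨x₀, (hfx.trans_lt (EReal.coe_lt_top α)).ne, x₀, (hgx.trans_lt (EReal.coe_lt_top α)).ne,
      φ₁, h₁, φ₂, h₂, fun β hβ => hφ.of_le hβ⟩
  by_cases hU : ∃ y, f y < α
  · by_cases hV : ∃ y, g y < α
    · exact exists_subdiffConv_intersectionProperty_of_exists_lt hfconv hfcont hgconv hgcont
        (disjoint_iff_inter_eq_empty.2 hIP) hfx hgx hU hV
    · obtain ⟨φ₂, h₂, φ₁, h₁, hφ⟩ := exists_subdiffConv_intersectionProperty_of_forall_le
        hgconv hgcont hfconv hfcont (hfbot x₀) (fun x => not_lt.1 fun h => hV ⟨x, h⟩) hgx hfx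
      exact ⟨φ₁, h₁, φ₂, h₂, hφ.symm⟩
  · exact exists_subdiffConv_intersectionProperty_of_forall_le hfconv hfcont hgconv hgcont
      (hgbot x₀) (fun x => not_lt.1 fun h => hU ⟨x, h⟩) hfx hgx

theorem intersection_property_conv_subgradients_all_levels
    {X : Type*} [AddCommGroup X] [Module ℝ X] [TopologicalSpace X]
    [IsTopologicalAddGroup X] [ContinuousSMul ℝ X] [LocallyConvexSpace ℝ X]
    (f g : X → EReal) (hfbot : ∀ x, f x ≠ ⊥) (hgbot : ∀ x, g x ≠ ⊥)
    (hfproper : (edom f).Nonempty) (hgproper : (edom g).Nonempty)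
    (hfconv : ERealConvexOn f) (hgconv : ERealConvexOn g)
    (hfcont : Continuous f) (hgcont : Continuous g)
    (α : ℝ)
    (hIP : {x | f x < (α : EReal)} ∩ {x | g x < (α : EReal)} = ∅)
    (hmeet : ({x | f x ≤ (α : EReal)} ∩ {x | g x ≤ (α : EReal)}).Nonempty) :
    ∃ x₁ ∈ edom f, ∃ x₂ ∈ edom g,
      ∃ φ₁ ∈ SubdiffConv f x₁, ∃ φ₂ ∈ SubdiffConv g x₂,
        ∀ β : ℝ, β ≤ α → IntersectionProperty φ₁ φ₂ β :=
  intersection_property_conv_subgradients_all_levels_general f g hfbot hgbot hfconv hgconv hfcont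
    hgcont α hIP hmeet
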